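/- arXiv:1012.5699 — 3 statements merged into one kernel-verified Lean document; each statement's English description precedes it below -/
import Mathlib

section
/- Let (p_k)_{0 ≤ k ≤ l} be real numbers with p_l = 0 and p_k ≤ (1/8)(1 + p_{k+1})³ for all 0 ≤ k < l. Then p_k ≤ 1/4 for all 0 ≤ k ≤ l; in particular p_0 ≤ 1/4. -/
theorem rfs_soundness_recursion (l : ℕ) (p : ℕ → ℝ) (hl : p l = 0)
    (hrec : ∀ k, k < l → p k ≤ (1 / 8) * (1 + p (k + 1)) ^ 3) :
    (∀ k, k ≤ l → p k ≤ 1 / 4) ∧ p 0 ≤ 1 / 4 := by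
  have H : ∀ d, d ≤ l → p (l - d) ≤ 1 / 4 := by
    intro d
    induction d with
    | zero => intro _; simp [hl]
    | succ d ih =>
      intro hdl
      have hd : d ≤ l := Nat.le_of_succ_le hdl
      have ihd := ih hd
      have hlt : l - (d + 1) < l := by omega
      have heq : l - (d + 1) + 1 = l - d := by omega
      have := hrec (l - (d + 1)) hlt
      rw [heq] at this
      nlinarith [ihd, sq_nonneg (p (l - d) - 1/4), sq_nonneg (p (l - d) + 9/4), sq_nonneg (1 + p (l - d))]
  have Hk : ∀ k, k ≤ l → p k ≤ 1 / 4 := by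
    intro k hk
    have := H (l - k) (Nat.sub_le _ _)
    rwa [Nat.sub_sub_self hk] at this
  exact ⟨Hk, Hk 0 (Nat.zero_le _)⟩
end

section
/- Soundness of the three-repetition check: suppose s, s' ∈ F_2^n with g(s') ≠ g(s) (hence s' ≠ s), and suppose the recursive subcall returns s·x for a uniformly random x with probability at least 1 − p, and otherwise returns an arbitrary (adversarial) value. Then the probability that all three independent checks 'subcall value = s'·x' pass is at most (1/2)(1+p) per check, hence at most (1/8)(1+p)³ overall. -/
open Finset

/-!
Whenever the subcall answers correctly, the check `a = s'·x` can only pass if `s'·x = s·x`.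
Since `s' - s ≠ 0`, this linear condition holds for exactly half of `F_2^n`, and because the
error event is independent of the uniform query, correct answers on that half have probability
`(1 - q) / 2`, where `q ≤ p` is the error probability. Hence a check passes with probability at
most `(1 - q) / 2 + q ≤ (1 + p) / 2`, and independence of the checks cubes this bound.
-/

lemma two_mul_card_filter_dotProduct_eq_zero {ι : Type*} [Fintype ι] [DecidableEq ι]
    {r : ι → ZMod 2} (hr : r ≠ 0) :
    2 * #(univ.filter fun v => r ⬝ᵥ v = 0) = 2 ^ Fintype.card ι := by
  obtain ⟨i, hi⟩ := Function.ne_iff.1 hr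
  have hri : r i = 1 := (by decide : ∀ c : ZMod 2, c ≠ 0 → c = 1) _ hi
  have hflip : ∀ v, ¬ r ⬝ᵥ (v + Pi.single i 1) = 0 ↔ r ⬝ᵥ v = 0 := fun v => by
    rw [dotProduct_add, dotProduct_single, hri, mul_one]
    exact (by decide : ∀ d : ZMod 2, ¬ d + 1 = 0 ↔ d = 0) _
  have hhalf : #(univ.filter fun v => r ⬝ᵥ v = 0) = #(univ.filter fun v => ¬ r ⬝ᵥ v = 0) :=
    card_equiv (Equiv.addRight (Pi.single i 1)) fun v => by
      simp only [mem_filter, mem_univ, true_and, Equiv.coe_addRight, hflip]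
  have htotal := card_filter_add_card_filter_not (s := univ) (fun v : ι → ZMod 2 => r ⬝ᵥ v = 0)
  rw [card_univ, Fintype.card_fun, ZMod.card] at htotal
  omega

section WeightedEvents

variable {Ω V : Type*} [Fintype Ω] {w : Ω → ℝ}

lemma sum_filter_le_sum_filter_of_imp (hw : ∀ ω, 0 ≤ w ω) {E F : Ω → Prop} [DecidablePred E]
    [DecidablePred F] (h : ∀ ω, E ω → F ω) :
    ∑ ω ∈ univ.filter E, w ω ≤ ∑ ω ∈ univ.filter F, w ω :=
  sum_le_sum_of_subset_of_nonneg (monotone_filter_right _ fun ω _ => h ω) fun ω _ _ => hw ω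

lemma sum_filter_and_add_sum_filter_and_not (E F : Ω → Prop) [DecidablePred E]
    [DecidablePred F] :
    ∑ ω ∈ univ.filter (fun ω => E ω ∧ F ω), w ω + ∑ ω ∈ univ.filter (fun ω => E ω ∧ ¬ F ω), w ω =
      ∑ ω ∈ univ.filter E, w ω := by
  rw [← filter_filter, ← filter_filter, sum_filter_add_sum_filter_not]

lemma sum_filter_and_eq_mul_of_and_not (hw1 : ∑ ω, w ω = 1) {E F : Ω → Prop}
    [DecidablePred E] [DecidablePred F]
    (h : ∑ ω ∈ univ.filter (fun ω => E ω ∧ ¬ F ω), w ω =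
      (∑ ω ∈ univ.filter E, w ω) * ∑ ω ∈ univ.filter (fun ω => ¬ F ω), w ω) :
    ∑ ω ∈ univ.filter (fun ω => E ω ∧ F ω), w ω =
      (∑ ω ∈ univ.filter E, w ω) * ∑ ω ∈ univ.filter F, w ω := by
  have hE := sum_filter_and_add_sum_filter_and_not (w := w) E F
  have hF := sum_filter_add_sum_filter_not univ F w
  rw [hw1] at hF
  linear_combination hE - h - (∑ ω ∈ univ.filter E, w ω) * hF

variable [Fintype V] [DecidableEq V] (X : Ω → V)

lemma sum_filter_comp_and_eq_sum_fiber (T : V → Prop) [DecidablePred T] (F : Ω → Prop)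
    [DecidablePred F] :
    ∑ ω ∈ univ.filter (fun ω => T (X ω) ∧ F ω), w ω =
      ∑ v ∈ univ.filter T, ∑ ω ∈ univ.filter (fun ω => X ω = v ∧ F ω), w ω := by
  rw [← sum_fiberwise_of_maps_to (g := X) (t := univ.filter T) (by simp +contextual)]
  refine sum_congr rfl fun v hv => ?_
  rw [filter_filter]
  refine sum_congr (filter_congr fun ω _ => ?_) fun _ _ => rfl
  rw [mem_filter] at hv
  constructor
  · rintro ⟨⟨-, hF⟩, rfl⟩
    exact ⟨rfl, hF⟩
  · rintro ⟨rfl, hF⟩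
    exact ⟨⟨hv.2, hF⟩, rfl⟩

lemma sum_filter_comp_eq_card_mul {c : ℝ}
    (hX : ∀ v, ∑ ω ∈ univ.filter (fun ω => X ω = v), w ω = c) (T : V → Prop) [DecidablePred T] :
    ∑ ω ∈ univ.filter (fun ω => T (X ω)), w ω = #(univ.filter T) * c := by
  have := sum_filter_comp_and_eq_sum_fiber (w := w) X T fun _ => True
  simp only [and_true] at this
  simp [this, hX]

lemma sum_filter_comp_and_eq_mul {F : Ω → Prop} [DecidablePred F]
    (hX : ∀ v, ∑ ω ∈ univ.filter (fun ω => X ω = v ∧ F ω), w ω =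
      (∑ ω ∈ univ.filter (fun ω => X ω = v), w ω) * ∑ ω ∈ univ.filter F, w ω)
    (T : V → Prop) [DecidablePred T] :
    ∑ ω ∈ univ.filter (fun ω => T (X ω) ∧ F ω), w ω =
      (∑ ω ∈ univ.filter (fun ω => T (X ω)), w ω) * ∑ ω ∈ univ.filter F, w ω := by
  have hT := sum_filter_comp_and_eq_sum_fiber (w := w) X T fun _ => True
  simp only [and_true] at hT
  rw [sum_filter_comp_and_eq_sum_fiber, hT, sum_mul]
  exact sum_congr rfl fun v _ => hX v

lemma sum_filter_eq_comp_le_of_indep_err (hw : ∀ ω, 0 ≤ w ω) (hw1 : ∑ ω, w ω = 1)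
    {R : Type*} [DecidableEq R] {A : Ω → R} {f f' : V → R} {p : ℝ}
    (hindep : ∀ v, ∑ ω ∈ univ.filter (fun ω => X ω = v ∧ A ω ≠ f (X ω)), w ω =
      (∑ ω ∈ univ.filter (fun ω => X ω = v), w ω) *
        ∑ ω ∈ univ.filter (fun ω => A ω ≠ f (X ω)), w ω)
    (hcorrect : 1 - p ≤ ∑ ω ∈ univ.filter (fun ω => A ω = f (X ω)), w ω) :
    ∑ ω ∈ univ.filter (fun ω => A ω = f' (X ω)), w ω ≤
      ∑ ω ∈ univ.filter (fun ω => f' (X ω) = f (X ω)), w ω +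
        (1 - ∑ ω ∈ univ.filter (fun ω => f' (X ω) = f (X ω)), w ω) * p := by
  set δ := ∑ ω ∈ univ.filter (fun ω => f' (X ω) = f (X ω)), w ω
  set q := ∑ ω ∈ univ.filter (fun ω => A ω ≠ f (X ω)), w ω
  have hq : ∑ ω ∈ univ.filter (fun ω => A ω = f (X ω)), w ω + q = 1 := by
    rw [sum_filter_add_sum_filter_not, hw1]
  have hδ : δ ≤ 1 := hw1 ▸ sum_le_sum_of_subset_of_nonneg (subset_univ _) fun ω _ _ => hw ω
  have hagree : ∑ ω ∈ univ.filter (fun ω => f' (X ω) = f (X ω) ∧ A ω = f (X ω)), w ω =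
      δ * (1 - q) := by
    rw [sum_filter_comp_and_eq_mul X (fun v => sum_filter_and_eq_mul_of_and_not hw1 (hindep v))
      (fun v => f' v = f v)]
    congr 1
    linarith
  have hsplit : ∑ ω ∈ univ.filter (fun ω => A ω = f' (X ω)), w ω ≤ δ * (1 - q) + q := by
    rw [← hagree, ← sum_filter_and_add_sum_filter_and_not (fun ω => A ω = f' (X ω))
      (fun ω => A ω = f (X ω))]
    exact add_le_add
      (sum_filter_le_sum_filter_of_imp hw fun ω ⟨hpass, hcorr⟩ => ⟨hpass.symm.trans hcorr, hcorr⟩)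
      (sum_filter_le_sum_filter_of_imp hw fun ω h => h.2)
  nlinarith [mul_le_mul_of_nonneg_left (show q ≤ p by linarith) (sub_nonneg.2 hδ)]

end WeightedEvents

theorem rfs_three_checks_sound_general (n : ℕ)
    (Ω : Type) [Fintype Ω]
    (w : Ω → ℝ) (hw : ∀ ω, 0 ≤ w ω) (hw1 : ∑ ω, w ω = 1)
    (p : ℝ)
    (g : (Fin n → ZMod 2) → ZMod 2)
    (s s' : Fin n → ZMod 2) (hg : g s' ≠ g s)
    (x : Fin 3 → Ω → (Fin n → ZMod 2)) (a : Fin 3 → Ω → ZMod 2)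
    -- each query is uniform
    (huniform : ∀ (j : Fin 3) (v : Fin n → ZMod 2),
      ∑ ω ∈ univ.filter (fun ω => x j ω = v), w ω = 1 / 2 ^ n)
    -- each subcall is correct with probability at least 1 - p
    (hcorrect : ∀ j : Fin 3,
      1 - p ≤ ∑ ω ∈ univ.filter (fun ω => a j ω = dotProduct s (x j ω)), w ω)
    -- within each check, the error event is independent of the query
    (hindep_err : ∀ (j : Fin 3) (v : Fin n → ZMod 2),
      ∑ ω ∈ univ.filter (fun ω => x j ω = v ∧ a j ω ≠ dotProduct s (x j ω)), w ω =
        (∑ ω ∈ univ.filter (fun ω => x j ω = v), w ω) *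
        (∑ ω ∈ univ.filter (fun ω => a j ω ≠ dotProduct s (x j ω)), w ω))
    -- the three checks are independent
    (hindep : ∑ ω ∈ univ.filter
        (fun ω => ∀ j : Fin 3, a j ω = dotProduct s' (x j ω)), w ω =
      ∏ j : Fin 3,
        ∑ ω ∈ univ.filter (fun ω => a j ω = dotProduct s' (x j ω)), w ω) :
    (∀ j : Fin 3,
      ∑ ω ∈ univ.filter (fun ω => a j ω = dotProduct s' (x j ω)), w ω ≤
        (1 / 2) * (1 + p)) ∧
    ∑ ω ∈ univ.filter (fun ω => ∀ j : Fin 3, a j ω = dotProduct s' (x j ω)), w ω ≤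
      (1 / 8) * (1 + p) ^ 3 := by
  have hs : s' - s ≠ 0 := sub_ne_zero.2 fun h => hg (congrArg g h)
  have hcard := two_mul_card_filter_dotProduct_eq_zero hs
  simp only [sub_dotProduct, sub_eq_zero, Fintype.card_fin] at hcard
  have hagree : ∀ j, ∑ ω ∈ univ.filter (fun ω => s' ⬝ᵥ x j ω = s ⬝ᵥ x j ω), w ω = 1 / 2 := by
    intro j
    rw [sum_filter_comp_eq_card_mul (x j) (huniform j) fun v => s' ⬝ᵥ v = s ⬝ᵥ v]
    have hcardℝ : (2 : ℝ) * #(univ.filter fun v => s' ⬝ᵥ v = s ⬝ᵥ v) = 2 ^ n := by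
      exact_mod_cast hcard
    field_simp
    linarith
  have hcheck : ∀ j : Fin 3,
      ∑ ω ∈ univ.filter (fun ω => a j ω = s' ⬝ᵥ x j ω), w ω ≤ 1 / 2 * (1 + p) := fun j =>
    (sum_filter_eq_comp_le_of_indep_err (x j) hw hw1 (hindep_err j) (hcorrect j)).trans_eq
      (by rw [hagree j]; ring)
  refine ⟨hcheck, hindep ▸ ?_⟩
  calc ∏ j : Fin 3, ∑ ω ∈ univ.filter (fun ω => a j ω = s' ⬝ᵥ x j ω), w ω
      ≤ ∏ _j : Fin 3, 1 / 2 * (1 + p) :=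
        prod_le_prod (fun j _ => sum_nonneg fun ω _ => hw ω) fun j _ => hcheck j
    _ = 1 / 8 * (1 + p) ^ 3 := by
        rw [prod_const, card_univ, Fintype.card_fin]
        ring

/-- Soundness of the three-repetition check of the RFS verifier, on a finite
probability space `Ω` with weights `w`.  `x j` is the uniformly random query of
check `j`, and `a j` is the value returned by the recursive subcall, which is
correct (`= s·x j`) with probability at least `1 - p`, the error event being
independent of the query; the three checks are independent. -/
theorem rfs_three_checks_sound (n : ℕ) (hn : 1 ≤ n)
    (Ω : Type) [Fintype Ω] [DecidableEq Ω]
    (w : Ω → ℝ) (hw : ∀ ω, 0 ≤ w ω) (hw1 : ∑ ω, w ω = 1)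
    (p : ℝ) (hp0 : 0 ≤ p) (hp1 : p ≤ 1)
    (g : (Fin n → ZMod 2) → ZMod 2)
    (s s' : Fin n → ZMod 2) (hg : g s' ≠ g s)
    (x : Fin 3 → Ω → (Fin n → ZMod 2)) (a : Fin 3 → Ω → ZMod 2)
    -- each query is uniform
    (huniform : ∀ (j : Fin 3) (v : Fin n → ZMod 2),
      ∑ ω ∈ univ.filter (fun ω => x j ω = v), w ω = 1 / 2 ^ n)
    -- each subcall is correct with probability at least 1 - p
    (hcorrect : ∀ j : Fin 3,
      1 - p ≤ ∑ ω ∈ univ.filter (fun ω => a j ω = dotProduct s (x j ω)), w ω)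
    -- within each check, the error event is independent of the query
    (hindep_err : ∀ (j : Fin 3) (v : Fin n → ZMod 2),
      ∑ ω ∈ univ.filter (fun ω => x j ω = v ∧ a j ω ≠ dotProduct s (x j ω)), w ω =
        (∑ ω ∈ univ.filter (fun ω => x j ω = v), w ω) *
        (∑ ω ∈ univ.filter (fun ω => a j ω ≠ dotProduct s (x j ω)), w ω))
    -- the three checks are independent
    (hindep : ∑ ω ∈ univ.filter
        (fun ω => ∀ j : Fin 3, a j ω = dotProduct s' (x j ω)), w ω =
      ∏ j : Fin 3,
        ∑ ω ∈ univ.filter (fun ω => a j ω = dotProduct s' (x j ω)), w ω) :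
    (∀ j : Fin 3,
      ∑ ω ∈ univ.filter (fun ω => a j ω = dotProduct s' (x j ω)), w ω ≤
        (1 / 2) * (1 + p)) ∧
    ∑ ω ∈ univ.filter (fun ω => ∀ j : Fin 3, a j ω = dotProduct s' (x j ω)), w ω ≤
      (1 / 8) * (1 + p) ^ 3 :=
  rfs_three_checks_sound_general n Ω w hw hw1 p g s s' hg x a huniform hcorrect hindep_err hindep
end

section
/- Completeness of the verifier: if the prover always returns the true secret s(x₁,…,x_k) when queried, then VERIFIER never aborts and returns g(s()), i.e., the protocol has completeness 1. Formally, under the RFS promise, by downward induction on k: VERIFIER(x₁,…,x_k) = g(s(x₁,…,x_k)) and the abort condition a ≠ s'·x_{k+1} never triggers, since a = g(s(x₁,…,x_{k+1})) = s(x₁,…,x_k)·x_{k+1} = s'·x_{k+1}. -/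
/-- The RFS verifier interacting with a prover `P`, parameterized by its random choices
`r` (the random child `r xs i` chosen at node `xs` in repetition `i`), defined by
recursion on the remaining depth.  At a leaf it queries the oracle `A`; at an internal
node it asks `P` for the secret `s'`, recursively checks the three random children, and
aborts (`none`) if any check fails, otherwise returns `some (g s')`. -/
def rfsVerifier (n : ℕ) (g : (Fin n → ZMod 2) → ZMod 2)
    (A : List (Fin n → ZMod 2) → ZMod 2)
    (P : List (Fin n → ZMod 2) → (Fin n → ZMod 2))
    (r : List (Fin n → ZMod 2) → Fin 3 → (Fin n → ZMod 2)) :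
    ℕ → List (Fin n → ZMod 2) → Option (ZMod 2)
  | 0, xs => some (A xs)
  | d + 1, xs =>
    if ∀ i : Fin 3,
        rfsVerifier n g A P r d (xs ++ [r xs i])
          = some (dotProduct (P xs) (r xs i))
    then some (g (P xs)) else none

/-! By induction on the remaining depth, the honest verifier returns `g (s xs)` at every node `xs`.
At an internal node the child `xs ++ [x]` returns `g (s (xs ++ [x]))`, which the promise rewrites
to `s xs ⬝ᵥ x`, so every check against the honest answer `s' = s xs` passes. -/

section Honest

variable {n l : ℕ} {g : (Fin n → ZMod 2) → ZMod 2} {s : List (Fin n → ZMod 2) → (Fin n → ZMod 2)}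
  {A : List (Fin n → ZMod 2) → ZMod 2} {r : List (Fin n → ZMod 2) → Fin 3 → (Fin n → ZMod 2)}

theorem rfsVerifier_succ_of_forall {d : ℕ} {xs : List (Fin n → ZMod 2)}
    (hchecks : ∀ i : Fin 3, rfsVerifier n g A s r d (xs ++ [r xs i]) = some (s xs ⬝ᵥ r xs i)) :
    rfsVerifier n g A s r (d + 1) xs = some (g (s xs)) := by
  rw [rfsVerifier, if_pos hchecks]

theorem rfsVerifier_honest
    (hpromise : ∀ (xs : List (Fin n → ZMod 2)) (x : Fin n → ZMod 2),
      xs.length + 1 ≤ l → g (s (xs ++ [x])) = s xs ⬝ᵥ x)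
    (hA : ∀ xs : List (Fin n → ZMod 2), xs.length = l → A xs = g (s xs)) :
    ∀ (d : ℕ) (xs : List (Fin n → ZMod 2)), xs.length + d = l →
      rfsVerifier n g A s r d xs = some (g (s xs))
  | 0, xs, hlen => by rw [rfsVerifier, hA xs hlen]
  | d + 1, xs, hlen => rfsVerifier_succ_of_forall fun i => by
      rw [rfsVerifier_honest hpromise hA d _ (by simp; omega), hpromise xs (r xs i) (by omega)]

end Honest

theorem rfs_verifier_complete_general (n l : ℕ)
    (g : (Fin n → ZMod 2) → ZMod 2)
    (s : List (Fin n → ZMod 2) → (Fin n → ZMod 2))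
    (A : List (Fin n → ZMod 2) → ZMod 2)
    (r : List (Fin n → ZMod 2) → Fin 3 → (Fin n → ZMod 2))
    (hpromise : ∀ (xs : List (Fin n → ZMod 2)) (x : Fin n → ZMod 2),
      xs.length + 1 ≤ l → g (s (xs ++ [x])) = dotProduct (s xs) x)
    (hA : ∀ xs : List (Fin n → ZMod 2), xs.length = l → A xs = g (s xs)) :
    (∀ xs : List (Fin n → ZMod 2), xs.length ≤ l →
      rfsVerifier n g A s r (l - xs.length) xs = some (g (s xs))) ∧
    rfsVerifier n g A s r l [] = some (g (s [])) := by
  have honest : ∀ xs : List (Fin n → ZMod 2), xs.length ≤ l →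
      rfsVerifier n g A s r (l - xs.length) xs = some (g (s xs)) := fun xs hxs =>
    rfsVerifier_honest hpromise hA _ xs (by omega)
  exact ⟨honest, by simpa using honest [] (Nat.zero_le l)⟩

/-- Completeness: with an honest prover, the verifier never aborts and returns the
correct answer `g (s [])`. -/
theorem rfs_verifier_complete (n l : ℕ) (hn : 0 < n) (hl : 0 < l)
    (g : (Fin n → ZMod 2) → ZMod 2)
    (s : List (Fin n → ZMod 2) → (Fin n → ZMod 2))
    (A : List (Fin n → ZMod 2) → ZMod 2)
    (r : List (Fin n → ZMod 2) → Fin 3 → (Fin n → ZMod 2))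
    (hpromise : ∀ (xs : List (Fin n → ZMod 2)) (x : Fin n → ZMod 2),
      xs.length + 1 ≤ l → g (s (xs ++ [x])) = dotProduct (s xs) x)
    (hA : ∀ xs : List (Fin n → ZMod 2), xs.length = l → A xs = g (s xs)) :
    (∀ xs : List (Fin n → ZMod 2), xs.length ≤ l →
      rfsVerifier n g A s r (l - xs.length) xs = some (g (s xs))) ∧
    rfsVerifier n g A s r l [] = some (g (s [])) :=
  rfs_verifier_complete_general n l g s A r hpromise hA
end
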